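/- arXiv:2306.04350 — 3 statements merged into one kernel-verified Lean document; each statement's English description precedes it below -/
import Mathlib

section
/- Let m be a nonempty finite type and let v, S, ℓ be m × m complex matrices. If the 2m × 2m block matrix [[v, S], [Sᴴ, ℓ]] (i.e., Matrix.fromBlocks v S Sᴴ ℓ) is positive semidefinite and has rank 1, then for all indices φ, ψ, η ∈ m one has v φ φ * ℓ ψ η = S φ η * conj(S φ ψ). (This is the paper's Lemma 2: a necessary condition, for each triple of phases φ, ψ, η on a line, implied by the positive-semidefinite rank-one power-flow constraints v_i^{φφ} ℓ_{ij}^{ψη} = S_{ij}^{φη} · conj(S_{ij}^{φψ}).) -/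
open Matrix
open scoped ComplexOrder

lemma rank_le_one_entry_mul {n : Type*} [Fintype n] [DecidableEq n]
    (N : Matrix n n ℂ) (h : N.rank ≤ 1) :
    ∀ a b c d, N a b * N c d = N a d * N c b := by
  have h' : Module.rank ℂ (LinearMap.range N.mulVecLin) ≤ 1 := by
    rw [Matrix.rank] at h
    rw [← Module.finrank_eq_rank]
    exact_mod_cast h
  obtain ⟨x, hx⟩ := (rank_submodule_le_one_iff' _).mp h'
  have hcol : ∀ b, ∃ c : ℂ, N.mulVec (Pi.single b 1) = c • x := by
    intro b
    have : N.mulVec (Pi.single b 1) ∈ LinearMap.range N.mulVecLin :=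
      ⟨Pi.single b 1, rfl⟩
    obtain ⟨c, hc⟩ := (Submodule.mem_span_singleton).mp (hx this)
    exact ⟨c, hc.symm⟩
  choose g hg using hcol
  have hentry : ∀ a b, N a b = g b * x a := by
    intro a b
    have := congrFun (hg b) a
    simpa [Matrix.mulVec, dotProduct, Pi.single_apply, mul_comm] using this
  intro a b c d
  rw [hentry a b, hentry c d, hentry a d, hentry c b]
  ring

/-- Lemma 2 of the paper: if the block matrix [[v, S], [Sᴴ, ℓ]] is positive
semidefinite and has rank 1, then `v φ φ * ℓ ψ η = S φ η * conj (S φ ψ)`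
for all phases φ, ψ, η. -/
theorem psd_rank_one_block_entry_identity
    {m : Type*} [Fintype m] [DecidableEq m] [Nonempty m]
    (v S ℓ : Matrix m m ℂ)
    (hpsd : (Matrix.fromBlocks v S Sᴴ ℓ).PosSemidef)
    (hrank : (Matrix.fromBlocks v S Sᴴ ℓ).rank = 1) :
    ∀ φ ψ η : m, v φ φ * ℓ ψ η = S φ η * (starRingEnd ℂ) (S φ ψ) := by
  intro φ ψ η
  have h := rank_le_one_entry_mul _ (le_of_eq hrank)
    (Sum.inl φ) (Sum.inl φ) (Sum.inr ψ) (Sum.inr η)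
  simpa [Matrix.fromBlocks, Matrix.conjTranspose_apply] using h
end

section
/- Let n be a finite type with decidable equality and let M be an n × n complex matrix. If M is positive semidefinite and has rank at most 1, then for all indices i, j, k ∈ n one has M i i * M j k = M i k * conj(M i j). (General entrywise identity underlying the paper's Lemma 2, obtained from the linear dependence of any pair of rows/columns of a rank-one positive semidefinite matrix.) -/
open Matrix
open scoped ComplexOrder

/-- Entrywise identity for a positive semidefinite matrix of rank at most one:
`M i i * M j k = M i k * conj (M i j)`. -/
theorem psd_rank_le_one_entry_identity
    {n : Type*} [Fintype n] [DecidableEq n]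
    (M : Matrix n n ℂ)
    (hpsd : M.PosSemidef) (hrank : M.rank ≤ 1) :
    ∀ i j k : n, M i i * M j k = M i k * (starRingEnd ℂ) (M i j) := by
  intro i j k
  have hherm : (starRingEnd ℂ) (M i j) = M j i := by
    have := hpsd.1
    rw [Matrix.IsHermitian] at this
    have h2 := congrFun (congrFun this j) i
    simpa [Matrix.conjTranspose_apply] using h2
  rw [hherm]
  -- the two relevant columns of M
  set W := LinearMap.range M.mulVecLin with hW
  have hu : (fun a => M a i) ∈ W := ⟨Pi.single i 1, by ext a; simp [Matrix.mulVecLin]⟩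
  have hw : (fun a => M a k) ∈ W := ⟨Pi.single k 1, by ext a; simp [Matrix.mulVecLin]⟩
  have hfin : Module.finrank ℂ W ≤ 1 := hrank
  have hdep : ¬ LinearIndependent ℂ ![(⟨_, hu⟩ : W), ⟨_, hw⟩] := by
    intro hind
    have := hind.fintype_card_le_finrank
    simp at this
    omega
  rw [LinearIndependent.pair_iff] at hdep
  push_neg at hdep
  obtain ⟨s, t, hst, hne⟩ := hdep
  have hst' : ∀ a, s * M a i + t * M a k = 0 := by
    intro a
    have := congrArg (fun v : W => (v : n → ℂ) a) hst
    simpa using this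
  have e1 := hst' i
  have e2 := hst' j
  by_cases ht : t = 0
  · have hs : s ≠ 0 := by tauto
    rw [ht, zero_mul, add_zero] at e1 e2
    have h1 : M i i = 0 := (mul_eq_zero.mp e1).resolve_left hs
    have h2 : M j i = 0 := (mul_eq_zero.mp e2).resolve_left hs
    rw [h1, h2, zero_mul, mul_zero]
  · have key : t * (M i i * M j k) = t * (M i k * M j i) := by
      linear_combination M i i * e2 - M j i * e1
    exact mul_left_cancel₀ ht key
end

section
/- (Lemma 1, three-phase voltage error formula.) Assume the rooted tree setup, the phase setup, and both power-flow models of the context, and assume the two models share the same root voltage matrix: v̂_0 = v_0. Then for every non-root bus h, the difference between the lossless-model voltage matrix and the lossy-model voltage matrix is the accumulated downstream-loss correction along the path from h to the root: v̂_h − v_h = Σ_{ξ ∈ P_h} ( M_ξ z_ξᴴ + z_ξ M_ξᴴ − z_ξ ℓ_ξ z_ξᴴ )|_{Φ_h}, where each summand (a Φ_ξ × Φ_ξ matrix, with Φ_h ⊆ Φ_ξ since ξ ∈ P_h) is restricted to the phase set Φ_h. -/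
attribute [local instance] Classical.propDecidable

/-- `i` is an ancestor of `h`: `i` is obtained from `h` by iterating the parent map. -/
def isAnc {N : ℕ} (par : Fin (N + 1) → Fin (N + 1)) (i h : Fin (N + 1)) : Prop :=
  ∃ n : ℕ, par^[n] h = i

/-- The path set of bus `h`: all non-root ancestors of `h`. -/
noncomputable def pathSet {N : ℕ} (par : Fin (N + 1) → Fin (N + 1)) (h : Fin (N + 1)) :
    Finset (Fin (N + 1)) :=
  Finset.univ.filter (fun i => i ≠ 0 ∧ isAnc par i h)

/-- Lines strictly downstream of line `j`. -/
noncomputable def down {N : ℕ} (par : Fin (N + 1) → Fin (N + 1)) (j : Fin (N + 1)) :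
    Finset (Fin (N + 1)) :=
  Finset.univ.filter (fun β => β ≠ 0 ∧ β ≠ j ∧ isAnc par j β)

/-- `subtree j = {j} ∪ down j`. -/
noncomputable def subtree {N : ℕ} (par : Fin (N + 1) → Fin (N + 1)) (j : Fin (N + 1)) :
    Finset (Fin (N + 1)) :=
  insert j (down par j)

/-- Children of bus `j`: non-root buses whose parent is `j`. -/
noncomputable def children {N : ℕ} (par : Fin (N + 1) → Fin (N + 1)) (j : Fin (N + 1)) :
    Finset (Fin (N + 1)) :=
  Finset.univ.filter (fun k => k ≠ 0 ∧ par k = j)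

/-- `α = exp(−2πi/3)`. -/
noncomputable def alphaPh : ℂ := Complex.exp (-(2 * Real.pi * Complex.I) / 3)

/-- Accumulated downstream loss `m_j^ψ := Σ_{β ∈ subtree(j), ψ ∈ Φ_β} (z_β ℓ_β)^{ψψ}`. -/
noncomputable def mAcc {N : ℕ} (par : Fin (N + 1) → Fin (N + 1))
    (Φ : Fin (N + 1) → Finset (Fin 3))
    (z ℓ : Fin (N + 1) → Matrix (Fin 3) (Fin 3) ℂ)
    (j : Fin (N + 1)) (ψ : Fin 3) : ℂ :=
  ∑ β ∈ (subtree par j).filter (fun β => ψ ∈ Φ β), ∑ η ∈ Φ β, z β ψ η * ℓ β η ψ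

/-- Accumulated-loss matrix `M_j^{φψ} := α^{φ−ψ} m_j^ψ`. -/
noncomputable def MAcc {N : ℕ} (par : Fin (N + 1) → Fin (N + 1))
    (Φ : Fin (N + 1) → Finset (Fin 3))
    (z ℓ : Fin (N + 1) → Matrix (Fin 3) (Fin 3) ℂ)
    (j : Fin (N + 1)) (φ ψ : Fin 3) : ℂ :=
  alphaPh ^ ((φ.val : ℤ) - (ψ.val : ℤ)) * mAcc par Φ z ℓ j ψ

section Helpers
variable {N : ℕ} {par : Fin (N + 1) → Fin (N + 1)} {dep : Fin (N + 1) → ℕ}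

lemma iter_root (hpar0 : par 0 = 0) : ∀ n, par^[n] 0 = 0 := by
  intro n; induction n with
  | zero => rfl
  | succ m ih => rw [Function.iterate_succ_apply', ih, hpar0]

lemma dep_par_le (hpar0 : par 0 = 0)
    (hdep : ∀ j, j ≠ 0 → dep (par j) < dep j) (x : Fin (N + 1)) :
    dep (par x) ≤ dep x := by
  by_cases hx : x = 0
  · subst hx; rw [hpar0]
  · exact (hdep x hx).le

lemma dep_iter_le (hpar0 : par 0 = 0)
    (hdep : ∀ j, j ≠ 0 → dep (par j) < dep j) :
    ∀ n (x : Fin (N + 1)), dep (par^[n] x) ≤ dep x := by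
  intro n
  induction n with
  | zero => intro x; exact le_rfl
  | succ m ih =>
      intro x
      rw [Function.iterate_succ_apply']
      exact (dep_par_le hpar0 hdep _).trans (ih x)

lemma anc_dep_lt (hpar0 : par 0 = 0)
    (hdep : ∀ j, j ≠ 0 → dep (par j) < dep j)
    {j β : Fin (N + 1)} (hj : j ≠ 0) (h : isAnc par j β) (hne : β ≠ j) :
    dep j < dep β := by
  obtain ⟨n, hn⟩ := h
  cases n with
  | zero => exact absurd hn.symm (by simpa using hne.symm)
  | succ m =>
      rw [Function.iterate_succ_apply'] at hn
      have hy0 : par^[m] β ≠ 0 := by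
        intro h0; rw [h0, hpar0] at hn; exact hj hn.symm
      calc dep j = dep (par (par^[m] β)) := by rw [hn]
        _ < dep (par^[m] β) := hdep _ hy0
        _ ≤ dep β := dep_iter_le hpar0 hdep m β

lemma Phi_anc {Φ : Fin (N + 1) → Finset (Fin 3)} (hpar0 : par 0 = 0)
    (hΦsub : ∀ j : Fin (N + 1), j ≠ 0 → Φ j ⊆ Φ (par j)) :
    ∀ n (β j : Fin (N + 1)), j ≠ 0 → par^[n] β = j → Φ β ⊆ Φ j := by
  intro n
  induction n with
  | zero => intro β j _ hn; rw [← hn]; exact subset_rfl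
  | succ m ih =>
      intro β j hj hn
      rw [Function.iterate_succ_apply'] at hn
      have hy0 : par^[m] β ≠ 0 := by
        intro h0; rw [h0, hpar0] at hn; exact hj hn.symm
      refine (ih β _ hy0 rfl).trans ?_
      rw [← hn]
      exact hΦsub _ hy0

lemma mem_pathSet {i h : Fin (N + 1)} :
    i ∈ pathSet par h ↔ i ≠ 0 ∧ isAnc par i h := by
  simp [pathSet]

lemma pathSet_root (hpar0 : par 0 = 0) : pathSet par (0 : Fin (N + 1)) = ∅ := by
  ext i
  simp only [mem_pathSet, Finset.notMem_empty, iff_false, not_and]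
  rintro hi ⟨n, hn⟩
  rw [iter_root hpar0] at hn
  exact hi hn.symm

lemma pathSet_eq_insert {h : Fin (N + 1)} (hh : h ≠ 0) :
    pathSet par h = insert h (pathSet par (par h)) := by
  ext i
  simp only [mem_pathSet, Finset.mem_insert]
  constructor
  · rintro ⟨hi0, n, hn⟩
    cases n with
    | zero => exact Or.inl hn.symm
    | succ m =>
        rw [Function.iterate_succ_apply] at hn
        exact Or.inr ⟨hi0, m, hn⟩
  · rintro (rfl | ⟨hi0, m, hm⟩)
    · exact ⟨hh, 0, rfl⟩
    · exact ⟨hi0, m + 1, by rw [Function.iterate_succ_apply]; exact hm⟩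

lemma notMem_pathSet_par (hpar0 : par 0 = 0)
    (hdep : ∀ j, j ≠ 0 → dep (par j) < dep j)
    {h : Fin (N + 1)} (hh : h ≠ 0) : h ∉ pathSet par (par h) := by
  rw [mem_pathSet]
  rintro ⟨-, n, hn⟩
  have h1 : dep (par^[n] (par h)) ≤ dep (par h) := dep_iter_le hpar0 hdep n (par h)
  rw [hn] at h1
  exact absurd (hdep h hh) (not_lt.mpr h1)

lemma down_eq_biUnion (hpar0 : par 0 = 0)
    (hdep : ∀ j, j ≠ 0 → dep (par j) < dep j)
    {j : Fin (N + 1)} (hj : j ≠ 0) :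
    down par j = (children par j).biUnion (subtree par) := by
  ext β
  simp only [down, children, subtree, Finset.mem_filter, Finset.mem_univ, true_and,
    Finset.mem_biUnion, Finset.mem_insert]
  constructor
  · rintro ⟨hβ0, hβj, n, hn⟩
    cases n with
    | zero => exact absurd hn.symm (by simpa using hβj.symm)
    | succ m =>
        rw [Function.iterate_succ_apply'] at hn
        have hy0 : par^[m] β ≠ 0 := by
          intro h0; rw [h0, hpar0] at hn; exact hj hn.symm
        refine ⟨par^[m] β, ⟨hy0, hn⟩, ?_⟩
        by_cases hbk : β = par^[m] β
        · exact Or.inl hbk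
        · exact Or.inr ⟨hβ0, hbk, m, rfl⟩
  · rintro ⟨k, ⟨hk0, hkj⟩, hβ⟩
    have hjk : dep j < dep k := by rw [← hkj]; exact hdep k hk0
    rcases hβ with rfl | ⟨hβ0, hβk, n, hn⟩
    · refine ⟨hk0, ?_, 1, by simpa using hkj⟩
      intro hbj; rw [hbj] at hjk; exact lt_irrefl _ hjk
    · have hkβ : dep k < dep β := anc_dep_lt hpar0 hdep hk0 ⟨n, hn⟩ hβk
      refine ⟨hβ0, ?_, n + 1, by rw [Function.iterate_succ_apply', hn]; exact hkj⟩
      intro hbj; rw [hbj] at hkβ; omega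

lemma subtree_disjoint (hpar0 : par 0 = 0)
    (hdep : ∀ j, j ≠ 0 → dep (par j) < dep j)
    {j : Fin (N + 1)} {k k' : Fin (N + 1)}
    (hk : k ∈ children par j) (hk' : k' ∈ children par j) (hne : k ≠ k') :
    Disjoint (subtree par k) (subtree par k') := by
  simp only [children, Finset.mem_filter, Finset.mem_univ, true_and] at hk hk'
  rw [Finset.disjoint_left]
  intro β hβ hβ'
  -- both k and k' are ancestors of β
  have anc_of : ∀ {c : Fin (N+1)}, c ≠ 0 → β ∈ subtree par c → isAnc par c β := by
    intro c hc hβc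
    simp only [subtree, down, Finset.mem_insert, Finset.mem_filter, Finset.mem_univ,
      true_and] at hβc
    rcases hβc with rfl | ⟨_, _, hanc⟩
    · exact ⟨0, rfl⟩
    · exact hanc
  obtain ⟨m, hm⟩ := anc_of hk.1 hβ
  obtain ⟨m', hm'⟩ := anc_of hk'.1 hβ'
  have key : ∀ (a b : Fin (N+1)) (p q : ℕ), a ≠ 0 → b ≠ 0 → par a = j → par b = j →
      a ≠ b → p ≤ q → par^[p] β = a → par^[q] β = b → False := by
    intro a b p q ha0 hb0 haj hbj hab hpq hp hq
    have hiter : par^[q - p] a = b := by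
      rw [← hp, ← Function.iterate_add_apply, Nat.sub_add_cancel hpq]
      exact hq
    cases hqp : q - p with
    | zero => rw [hqp] at hiter; exact hab hiter
    | succ t =>
        rw [hqp, Function.iterate_succ_apply, haj] at hiter
        have h1 : dep (par^[t] j) ≤ dep j := dep_iter_le hpar0 hdep t j
        rw [hiter] at h1
        have h2 : dep j < dep b := by rw [← hbj]; exact hdep b hb0
        omega
  rcases le_total m m' with hmm | hmm
  · exact key k k' m m' hk.1 hk'.1 hk.2 hk'.2 hne hmm hm hm'
  · exact key k' k m' m hk'.1 hk.1 hk'.2 hk.2 (Ne.symm hne) hmm hm' hm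

end Helpers

section Part2
variable {N : ℕ} {par : Fin (N + 1) → Fin (N + 1)} {dep : Fin (N + 1) → ℕ}
  {Φ : Fin (N + 1) → Finset (Fin 3)} {z ℓ : Fin (N + 1) → Matrix (Fin 3) (Fin 3) ℂ}

lemma mem_subtree_anc {k β : Fin (N + 1)} (hβ : β ∈ subtree par k) : isAnc par k β := by
  simp only [subtree, down, Finset.mem_insert, Finset.mem_filter, Finset.mem_univ,
    true_and] at hβ
  rcases hβ with rfl | ⟨_, _, hanc⟩
  · exact ⟨0, rfl⟩
  · exact hanc

lemma mAcc_eq_zero (hpar0 : par 0 = 0)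
    (hΦsub : ∀ j : Fin (N + 1), j ≠ 0 → Φ j ⊆ Φ (par j))
    {k : Fin (N + 1)} (hk : k ≠ 0) {ψ : Fin 3} (hψ : ψ ∉ Φ k) :
    mAcc par Φ z ℓ k ψ = 0 := by
  unfold mAcc
  rw [Finset.filter_eq_empty_iff.mpr, Finset.sum_empty]
  intro β hβ hmem
  obtain ⟨n, hn⟩ := mem_subtree_anc hβ
  exact hψ (Phi_anc hpar0 hΦsub n β k hk hn hmem)

lemma mAcc_rec (hpar0 : par 0 = 0)
    (hdep : ∀ j, j ≠ 0 → dep (par j) < dep j)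
    {j : Fin (N + 1)} (hj : j ≠ 0) {ψ : Fin 3} (hψ : ψ ∈ Φ j) :
    mAcc par Φ z ℓ j ψ
      = (∑ η ∈ Φ j, z j ψ η * ℓ j η ψ) + ∑ k ∈ children par j, mAcc par Φ z ℓ k ψ := by
  unfold mAcc subtree
  have hjd : j ∉ down par j := by simp [down]
  rw [Finset.filter_insert, if_pos hψ, Finset.sum_insert (by
    simp only [Finset.mem_filter]; exact fun h => hjd h.1)]
  congr 1
  rw [down_eq_biUnion hpar0 hdep hj, Finset.filter_biUnion, Finset.sum_biUnion (by
    intro k hk k' hk' hne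
    exact Disjoint.mono (Finset.filter_subset _ _) (Finset.filter_subset _ _)
      (subtree_disjoint hpar0 hdep hk hk' hne))]
  rfl

lemma Lam_diff (hpar0 : par 0 = 0)
    (hdep : ∀ j, j ≠ 0 → dep (par j) < dep j)
    (hΦsub : ∀ j : Fin (N + 1), j ≠ 0 → Φ j ⊆ Φ (par j))
    {s Λ Λhat : Fin (N + 1) → Fin 3 → ℂ}
    (hΛ : ∀ j : Fin (N + 1), j ≠ 0 → ∀ ψ ∈ Φ j,
      Λ j ψ = (∑ k ∈ children par j, if ψ ∈ Φ k then Λ k ψ else 0)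
        - s j ψ + ∑ η ∈ Φ j, z j ψ η * ℓ j η ψ)
    (hΛhat : ∀ j : Fin (N + 1), j ≠ 0 → ∀ ψ ∈ Φ j,
      Λhat j ψ = (∑ k ∈ children par j, if ψ ∈ Φ k then Λhat k ψ else 0) - s j ψ) :
    ∀ n (j : Fin (N + 1)), j ≠ 0 → (Finset.univ.sup dep) - dep j < n →
      ∀ ψ ∈ Φ j, Λ j ψ - Λhat j ψ = mAcc par Φ z ℓ j ψ := by
  intro n
  induction n with
  | zero => intro j _ hlt; omega
  | succ n ih =>
      intro j hj hlt ψ hψ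
      rw [hΛ j hj ψ hψ, hΛhat j hj ψ hψ]
      have hchild : (∑ k ∈ children par j, if ψ ∈ Φ k then Λ k ψ else 0)
          - (∑ k ∈ children par j, if ψ ∈ Φ k then Λhat k ψ else 0)
          = ∑ k ∈ children par j, mAcc par Φ z ℓ k ψ := by
        rw [← Finset.sum_sub_distrib]
        apply Finset.sum_congr rfl
        intro k hk
        simp only [children, Finset.mem_filter, Finset.mem_univ, true_and] at hk
        by_cases hψk : ψ ∈ Φ k
        · rw [if_pos hψk, if_pos hψk]
          apply ih k hk.1 _ ψ hψk
          have h1 : dep j < dep k := by rw [← hk.2]; exact hdep k hk.1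
          have h2 : dep k ≤ Finset.univ.sup dep := Finset.le_sup (Finset.mem_univ k)
          omega
        · rw [if_neg hψk, if_neg hψk, sub_zero,
            mAcc_eq_zero hpar0 hΦsub hk.1 hψk]
      rw [mAcc_rec hpar0 hdep hj hψ, ← hchild]
      ring

end Part2

/-- Lemma 1 of the paper (three-phase voltage error formula): the difference between
the lossless-model voltage matrix and the lossy-model voltage matrix is the
accumulated downstream-loss correction
`v̂_h − v_h = Σ_{ξ ∈ P_h} (M_ξ z_ξᴴ + z_ξ M_ξᴴ − z_ξ ℓ_ξ z_ξᴴ)|_{Φ_h}`. -/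
theorem three_phase_voltage_error_formula {N : ℕ} (hN : 1 ≤ N)
    (par : Fin (N + 1) → Fin (N + 1)) (dep : Fin (N + 1) → ℕ)
    (hpar0 : par 0 = 0)
    (hdep : ∀ j : Fin (N + 1), j ≠ 0 → dep (par j) < dep j)
    (Φ : Fin (N + 1) → Finset (Fin 3))
    (hΦne : ∀ j : Fin (N + 1), (Φ j).Nonempty)
    (hΦsub : ∀ j : Fin (N + 1), j ≠ 0 → Φ j ⊆ Φ (par j))
    (z ℓ : Fin (N + 1) → Matrix (Fin 3) (Fin 3) ℂ)
    (s : Fin (N + 1) → Fin 3 → ℂ)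
    -- lossy balanced-voltage model
    (v S : Fin (N + 1) → Matrix (Fin 3) (Fin 3) ℂ)
    (Λ : Fin (N + 1) → Fin 3 → ℂ)
    (hv : ∀ j : Fin (N + 1), j ≠ 0 → ∀ φ ∈ Φ j, ∀ ψ ∈ Φ j,
      v j φ ψ = v (par j) φ ψ
        - ((∑ η ∈ Φ j, S j φ η * (starRingEnd ℂ) (z j ψ η))
            + ∑ η ∈ Φ j, z j φ η * (starRingEnd ℂ) (S j ψ η))
        + ∑ η ∈ Φ j, ∑ κ ∈ Φ j, z j φ η * ℓ j η κ * (starRingEnd ℂ) (z j ψ κ))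
    (hS : ∀ j : Fin (N + 1), j ≠ 0 → ∀ φ ∈ Φ j, ∀ ψ ∈ Φ j,
      S j φ ψ = alphaPh ^ ((φ.val : ℤ) - (ψ.val : ℤ)) * Λ j ψ)
    (hΛ : ∀ j : Fin (N + 1), j ≠ 0 → ∀ ψ ∈ Φ j,
      Λ j ψ = (∑ k ∈ children par j, if ψ ∈ Φ k then Λ k ψ else 0)
        - s j ψ + ∑ η ∈ Φ j, z j ψ η * ℓ j η ψ)
    -- lossless linearized model
    (vhat Shat : Fin (N + 1) → Matrix (Fin 3) (Fin 3) ℂ)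
    (Λhat : Fin (N + 1) → Fin 3 → ℂ)
    (hvhat : ∀ j : Fin (N + 1), j ≠ 0 → ∀ φ ∈ Φ j, ∀ ψ ∈ Φ j,
      vhat j φ ψ = vhat (par j) φ ψ
        - ((∑ η ∈ Φ j, Shat j φ η * (starRingEnd ℂ) (z j ψ η))
            + ∑ η ∈ Φ j, z j φ η * (starRingEnd ℂ) (Shat j ψ η)))
    (hShat : ∀ j : Fin (N + 1), j ≠ 0 → ∀ φ ∈ Φ j, ∀ ψ ∈ Φ j,
      Shat j φ ψ = alphaPh ^ ((φ.val : ℤ) - (ψ.val : ℤ)) * Λhat j ψ)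
    (hΛhat : ∀ j : Fin (N + 1), j ≠ 0 → ∀ ψ ∈ Φ j,
      Λhat j ψ = (∑ k ∈ children par j, if ψ ∈ Φ k then Λhat k ψ else 0) - s j ψ)
    -- the two models share the same root voltage matrix
    (hroot : ∀ φ ∈ Φ 0, ∀ ψ ∈ Φ 0, vhat 0 φ ψ = v 0 φ ψ) :
    ∀ h : Fin (N + 1), h ≠ 0 → ∀ φ ∈ Φ h, ∀ ψ ∈ Φ h,
      vhat h φ ψ - v h φ ψ =
        ∑ ξ ∈ pathSet par h,
          ((∑ η ∈ Φ ξ, MAcc par Φ z ℓ ξ φ η * (starRingEnd ℂ) (z ξ ψ η))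
            + (∑ η ∈ Φ ξ, z ξ φ η * (starRingEnd ℂ) (MAcc par Φ z ℓ ξ ψ η))
            - ∑ η ∈ Φ ξ, ∑ κ ∈ Φ ξ,
                z ξ φ η * ℓ ξ η κ * (starRingEnd ℂ) (z ξ ψ κ)) := by
  have Sdiff : ∀ j : Fin (N + 1), j ≠ 0 → ∀ φ ∈ Φ j, ∀ ψ ∈ Φ j,
      S j φ ψ - Shat j φ ψ = MAcc par Φ z ℓ j φ ψ := by
    intro j hj φ hφ ψ hψ
    rw [hS j hj φ hφ ψ hψ, hShat j hj φ hφ ψ hψ, MAcc, ← mul_sub,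
      Lam_diff hpar0 hdep hΦsub hΛ hΛhat (Finset.univ.sup dep - dep j + 1) j hj
        (by omega) ψ hψ]
  have main : ∀ n, ∀ h : Fin (N + 1), h ≠ 0 → dep h < n → ∀ φ ∈ Φ h, ∀ ψ ∈ Φ h,
      vhat h φ ψ - v h φ ψ =
        ∑ ξ ∈ pathSet par h,
          ((∑ η ∈ Φ ξ, MAcc par Φ z ℓ ξ φ η * (starRingEnd ℂ) (z ξ ψ η))
            + (∑ η ∈ Φ ξ, z ξ φ η * (starRingEnd ℂ) (MAcc par Φ z ℓ ξ ψ η))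
            - ∑ η ∈ Φ ξ, ∑ κ ∈ Φ ξ,
                z ξ φ η * ℓ ξ η κ * (starRingEnd ℂ) (z ξ ψ κ)) := by
    intro n
    induction n with
    | zero => intro h _ hlt; exact absurd hlt (Nat.not_lt_zero _)
    | succ n ih =>
        intro h hh hlt φ hφ ψ hψ
        have hφi : φ ∈ Φ (par h) := hΦsub h hh hφ
        have hψi : ψ ∈ Φ (par h) := hΦsub h hh hψ
        have hpar_sum : vhat (par h) φ ψ - v (par h) φ ψ
            = ∑ ξ ∈ pathSet par (par h),
              ((∑ η ∈ Φ ξ, MAcc par Φ z ℓ ξ φ η * (starRingEnd ℂ) (z ξ ψ η))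
            + (∑ η ∈ Φ ξ, z ξ φ η * (starRingEnd ℂ) (MAcc par Φ z ℓ ξ ψ η))
            - ∑ η ∈ Φ ξ, ∑ κ ∈ Φ ξ,
                z ξ φ η * ℓ ξ η κ * (starRingEnd ℂ) (z ξ ψ κ)) := by
          by_cases hi0 : par h = 0
          · rw [hi0, pathSet_root hpar0, Finset.sum_empty,
              hroot φ (by rwa [hi0] at hφi) ψ (by rwa [hi0] at hψi), sub_self]
          · exact ih (par h) hi0 (by have := hdep h hh; omega) φ hφi ψ hψi
        have e1 : ∑ η ∈ Φ h, S h φ η * (starRingEnd ℂ) (z h ψ η)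
            - ∑ η ∈ Φ h, Shat h φ η * (starRingEnd ℂ) (z h ψ η)
            = ∑ η ∈ Φ h, MAcc par Φ z ℓ h φ η * (starRingEnd ℂ) (z h ψ η) := by
          rw [← Finset.sum_sub_distrib]
          exact Finset.sum_congr rfl fun η hη => by
            rw [← sub_mul, Sdiff h hh φ hφ η hη]
        have e2 : ∑ η ∈ Φ h, z h φ η * (starRingEnd ℂ) (S h ψ η)
            - ∑ η ∈ Φ h, z h φ η * (starRingEnd ℂ) (Shat h ψ η)
            = ∑ η ∈ Φ h, z h φ η * (starRingEnd ℂ) (MAcc par Φ z ℓ h ψ η) := by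
          rw [← Finset.sum_sub_distrib]
          exact Finset.sum_congr rfl fun η hη => by
            rw [← mul_sub, ← map_sub, Sdiff h hh ψ hψ η hη]
        rw [pathSet_eq_insert hh, Finset.sum_insert (notMem_pathSet_par hpar0 hdep hh)]
        have hv' := hv h hh φ hφ ψ hψ
        have hvhat' := hvhat h hh φ hφ ψ hψ
        linear_combination hvhat' - hv' + hpar_sum + e1 + e2
  intro h hh φ hφ ψ hψ
  exact main (dep h + 1) h hh (by omega) φ hφ ψ hψ
end
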